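/- arXiv:2101.05692 — 3 statements merged into one kernel-verified Lean document; each statement's English description precedes it below -/
import Mathlib

section
/- Let λ_j = e^{iθ_j}, j = 1,...,d, be eigenvalues of a unitary U all lying in an arc of angular width θ ≤ π, and let (j₀, k₀) be indices achieving the maximum angular separation |θ_{j₀} − θ_{k₀}| among all pairs. Then the minimum of |Σ_j t_j e^{iθ_j}| over convex weights (t_j ≥ 0, Σ t_j = 1) equals √(1/2 + (1/2)cos(θ_{j₀} − θ_{k₀})), i.e., the minimum absolute value of the numerical range δ(U) = √(1/2 + (1/2)cos(θ_{j₀} − θ_{k₀})). -/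
/-!
Put `μ = (θ_{j₀} + θ_{k₀})/2` and `Δ = θ_{j₀} - θ_{k₀}`. Maximality of `|Δ|` forces every `θ_j`
into the interval of half-width `|Δ|/2` around `μ`, and `|Δ| ≤ π` by the arc hypothesis, so
`cos (θ_j - μ) ≥ cos (Δ/2) ≥ 0`. After rotation by `e^{-iμ}`, the real part, hence the modulus,
of any convex combination is at least `cos (Δ/2)`. The midpoint of `e^{iθ_{j₀}}` and `e^{iθ_{k₀}}` has modulus
exactly `cos (Δ/2) = √(1/2 + cos Δ / 2)`.
-/

theorem Real.cos_le_cos_of_abs_le {x y : ℝ} (hy : |y| ≤ Real.pi) (h : |x| ≤ |y|) :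
    Real.cos y ≤ Real.cos x := by
  rw [← Real.cos_abs x, ← Real.cos_abs y]
  exact Real.cos_le_cos_of_nonneg_of_le_pi (abs_nonneg x) hy h

theorem abs_sub_midpoint_le {x y z : ℝ} (hx : |z - x| ≤ |x - y|) (hy : |z - y| ≤ |x - y|) :
    |z - (x + y) / 2| ≤ |x - y| / 2 := by
  rw [abs_le] at hx hy ⊢
  rcases abs_cases (x - y) with ⟨h, _⟩ | ⟨h, _⟩ <;> rw [h] at hx hy ⊢ <;> constructor <;>
    linarith [hx.1, hx.2, hy.1, hy.2]

namespace Complex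

theorem exp_mul_I_add_exp_mul_I (x y : ℝ) :
    exp (x * I) + exp (y * I) = 2 * Real.cos ((x - y) / 2) * exp (((x + y) / 2 : ℝ) * I) := by
  rw [ofReal_cos, two_cos, add_mul, ← exp_add, ← exp_add]
  congr 2 <;> push_cast <;> ring

theorem norm_exp_mul_I_add_exp_mul_I (x y : ℝ) :
    ‖exp (x * I) + exp (y * I)‖ = 2 * |Real.cos ((x - y) / 2)| := by
  rw [exp_mul_I_add_exp_mul_I, norm_mul, norm_exp_ofReal_mul_I, norm_mul, norm_real,
    Real.norm_eq_abs, Complex.norm_two, mul_one]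

variable {ι : Type*} [Fintype ι]

theorem le_norm_sum_mul_exp_of_le_cos {θ t : ι → ℝ} (ht : t ∈ stdSimplex ℝ ι) {μ c : ℝ}
    (hc : ∀ j, c ≤ Real.cos (θ j - μ)) : c ≤ ‖∑ j, (t j : ℂ) * exp (θ j * I)‖ := by
  have hrot : ∀ j, exp ((-μ : ℝ) * I) * ((t j : ℂ) * exp (θ j * I))
      = t j * exp ((θ j - μ : ℝ) * I) := by
    intro j
    rw [mul_left_comm, ← exp_add]
    congr 2
    push_cast
    ring
  calc c = ∑ j, t j * c := by rw [← Finset.sum_mul, ht.2, one_mul]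
    _ ≤ ∑ j, t j * Real.cos (θ j - μ) :=
        Finset.sum_le_sum fun j _ => mul_le_mul_of_nonneg_left (hc j) (ht.1 j)
    _ = (exp ((-μ : ℝ) * I) * ∑ j, (t j : ℂ) * exp (θ j * I)).re := by
        simp only [Finset.mul_sum, hrot, re_sum, re_ofReal_mul, exp_ofReal_mul_I_re]
    _ ≤ ‖exp ((-μ : ℝ) * I) * ∑ j, (t j : ℂ) * exp (θ j * I)‖ := re_le_norm _
    _ = ‖∑ j, (t j : ℂ) * exp (θ j * I)‖ := by rw [norm_mul, norm_exp_ofReal_mul_I, one_mul]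

theorem norm_sum_midpoint_single_mul_exp [DecidableEq ι] (θ : ι → ℝ) (j₀ k₀ : ι) :
    ‖∑ j, ((midpoint ℝ (Pi.single j₀ 1) (Pi.single k₀ 1) : ι → ℝ) j : ℂ) * exp (θ j * I)‖
      = |Real.cos ((θ j₀ - θ k₀) / 2)| := by
  have hsum : ∑ j, ((midpoint ℝ (Pi.single j₀ 1) (Pi.single k₀ 1) : ι → ℝ) j : ℂ) * exp (θ j * I)
      = (exp (θ j₀ * I) + exp (θ k₀ * I)) / 2 := by
    simp only [midpoint_eq_smul_add, invOf_eq_inv, Pi.smul_apply, Pi.add_apply, Pi.single_apply, smul_eq_mul,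
      mul_add, mul_ite, mul_one, mul_zero, ofReal_add, apply_ite ofReal, ofReal_zero, add_mul,
      ite_mul, zero_mul, Finset.sum_add_distrib, Finset.sum_ite_eq', Finset.mem_univ, if_true]
    push_cast
    ring
  rw [hsum, norm_div, norm_exp_mul_I_add_exp_mul_I, Complex.norm_two]
  ring

end Complex

theorem min_abs_convex_hull_arc_general {d : ℕ} (θs : Fin d → ℝ) (θarc a : ℝ)
    (hθ : θarc ≤ Real.pi)
    (harc : ∀ j, θs j ∈ Set.Icc a (a + θarc))
    (j₀ k₀ : Fin d)
    (hmax : ∀ j k, |θs j - θs k| ≤ |θs j₀ - θs k₀|) :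
    (⨅ t : {t : Fin d → ℝ // (∀ j, 0 ≤ t j) ∧ ∑ j, t j = 1},
        ‖∑ j, (t.1 j : ℂ) * Complex.exp ((θs j : ℂ) * Complex.I)‖) =
      Real.sqrt (1/2 + (1/2) * Real.cos (θs j₀ - θs k₀)) := by
  have hπ : |θs j₀ - θs k₀| ≤ Real.pi := by
    linarith [abs_sub_le_of_le_of_le (harc j₀).1 (harc j₀).2 (harc k₀).1 (harc k₀).2]
  have hπ2 : |(θs j₀ - θs k₀) / 2| ≤ Real.pi := by
    rw [abs_div, abs_two]
    linarith [Real.pi_pos]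
  have hcos_half : Real.cos ((θs j₀ - θs k₀) / 2)
      = Real.sqrt (1/2 + (1/2) * Real.cos (θs j₀ - θs k₀)) := by
    rw [Real.cos_half (abs_le.mp hπ).1 (abs_le.mp hπ).2]
    ring_nf
  have hcos : ∀ j, Real.cos ((θs j₀ - θs k₀) / 2)
      ≤ Real.cos (θs j - (θs j₀ + θs k₀) / 2) := fun j =>
    Real.cos_le_cos_of_abs_le hπ2 <| by
      rw [abs_div, abs_two]
      exact abs_sub_midpoint_le (hmax j j₀) (hmax j k₀)
  have hmid := Complex.norm_sum_midpoint_single_mul_exp θs j₀ k₀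
  rw [abs_of_nonneg (hcos_half ▸ Real.sqrt_nonneg _)] at hmid
  rw [← hcos_half]
  exact IsLeast.csInf_eq
    ⟨⟨⟨_, (convex_stdSimplex ℝ (Fin d)).midpoint_mem (single_mem_stdSimplex ℝ j₀)
        (single_mem_stdSimplex ℝ k₀)⟩, hmid⟩,
      by rintro _ ⟨t, rfl⟩; exact Complex.le_norm_sum_mul_exp_of_le_cos t.2 hcos⟩

/-- If eigenvalues `e^{iθⱼ}` of a unitary all lie in an arc of width `θarc ≤ π`
and `(j₀, k₀)` achieves the maximal angular separation, then the minimum of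
`|Σⱼ tⱼ e^{iθⱼ}|` over convex weights (i.e. the minimum modulus over the convex hull of the
eigenvalues, which is δ(U)) equals `√(1/2 + (1/2)cos(θⱼ₀ − θ_k₀))`. -/
theorem min_abs_convex_hull_arc {d : ℕ} (θs : Fin d → ℝ) (θarc a : ℝ)
    (hθ : θarc ≤ Real.pi) (hθ0 : 0 ≤ θarc)
    (harc : ∀ j, θs j ∈ Set.Icc a (a + θarc))
    (j₀ k₀ : Fin d)
    (hmax : ∀ j k, |θs j - θs k| ≤ |θs j₀ - θs k₀|) :
    (⨅ t : {t : Fin d → ℝ // (∀ j, 0 ≤ t j) ∧ ∑ j, t j = 1},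
        ‖∑ j, (t.1 j : ℂ) * Complex.exp ((θs j : ℂ) * Complex.I)‖) =
      Real.sqrt (1/2 + (1/2) * Real.cos (θs j₀ - θs k₀)) :=
  min_abs_convex_hull_arc_general θs θarc a hθ harc j₀ k₀ hmax
end

section
/- For angles θ₁,...,θ_d all contained in an arc of width θ ≤ π, and for any convex weights t_j ≥ 0 with Σ t_j = 1, the quantity Σ_{j≠k} t_j t_k (1 − cos(θ_j − θ_k)) is maximized when the weights are supported on only two indices j₀, k₀ achieving the maximal angular separation |θ_{j₀} − θ_{k₀}| = θ. -/
/-!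
Expanding `cos (θⱼ - θₖ)` shows that the objective equals `1 - ‖∑ tⱼ e^{iθⱼ}‖²`, so it is
maximal where the weighted barycentre of the points `e^{iθⱼ}` is shortest. Projecting onto the
direction of the midpoint `μ` of the arc gives `‖∑ tⱼ e^{iθⱼ}‖ ≥ ∑ tⱼ cos (θⱼ - μ) ≥ cos (θ / 2)
≥ 0`, and the weights `1/2, 1/2` on two endpoints of the arc attain this bound.
-/

open Finset Real

section

variable {ι : Type*}

/-- `‖∑ j, t j • exp (θ j * I)‖ ^ 2`, the squared length of the weighted barycentre of the
points `θ j` on the unit circle. -/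
noncomputable def barycentreNormSq [Fintype ι] (t θ : ι → ℝ) : ℝ :=
  (∑ j, t j * cos (θ j)) ^ 2 + (∑ j, t j * sin (θ j)) ^ 2

theorem sum_sum_ne_mul_one_sub_cos_eq [Fintype ι] [DecidableEq ι] (θ : ι → ℝ) {t : ι → ℝ}
    (ht : ∑ j, t j = 1) :
    ∑ j, ∑ k ∈ univ.filter (fun k => k ≠ j), t j * t k * (1 - cos (θ j - θ k)) =
      1 - barycentreNormSq t θ := by
  have hdiag (j : ι) :
      ∑ k ∈ univ.filter (fun k => k ≠ j), t j * t k * (1 - cos (θ j - θ k)) =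
        ∑ k, t j * t k * (1 - cos (θ j - θ k)) := by
    rw [filter_ne', sum_erase]
    simp
  have hterm (j k : ι) : t j * t k * (1 - cos (θ j - θ k)) =
      t j * t k - t j * cos (θ j) * (t k * cos (θ k)) -
        t j * sin (θ j) * (t k * sin (θ k)) := by
    rw [cos_sub]; ring
  simp_rw [hdiag, hterm, sum_sub_distrib, ← mul_sum, ← sum_mul, ht, barycentreNormSq]
  ring

theorem sq_mul_cos_add_mul_sin_le (x y μ : ℝ) :
    (x * cos μ + y * sin μ) ^ 2 ≤ x ^ 2 + y ^ 2 := by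
  nlinarith [sin_sq_add_cos_sq μ, sq_nonneg (x * sin μ - y * cos μ)]

theorem cos_half_le_sum_mul_cos_sub [Fintype ι] {t θ : ι → ℝ} {a w : ℝ} (hw : w ≤ 2 * π)
    (ht0 : ∀ j, 0 ≤ t j) (ht1 : ∑ j, t j = 1) (hθ : ∀ j, θ j ∈ Set.Icc a (a + w)) :
    cos (w / 2) ≤ ∑ j, t j * cos (θ j - (a + w / 2)) := by
  have hcos (j : ι) : cos (w / 2) ≤ cos (θ j - (a + w / 2)) := by
    obtain ⟨hlo, hhi⟩ := hθ j
    rw [← cos_abs (θ j - _)]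
    exact cos_le_cos_of_nonneg_of_le_pi (abs_nonneg _) (by linarith)
      (abs_le.2 ⟨by linarith, by linarith⟩)
  calc cos (w / 2) = ∑ j, t j * cos (w / 2) := by rw [← sum_mul, ht1, one_mul]
    _ ≤ ∑ j, t j * cos (θ j - (a + w / 2)) :=
      sum_le_sum fun j _ => mul_le_mul_of_nonneg_left (hcos j) (ht0 j)

theorem one_add_cos_div_two_le_barycentreNormSq [Fintype ι] {t θ : ι → ℝ} {a w : ℝ}
    (hw0 : 0 ≤ w) (hw : w ≤ π) (ht0 : ∀ j, 0 ≤ t j) (ht1 : ∑ j, t j = 1)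
    (hθ : ∀ j, θ j ∈ Set.Icc a (a + w)) :
    (1 + cos w) / 2 ≤ barycentreNormSq t θ := by
  set μ := a + w / 2
  have hexpand : ∑ j, t j * cos (θ j - μ) =
      (∑ j, t j * cos (θ j)) * cos μ + (∑ j, t j * sin (θ j)) * sin μ := by
    simp_rw [cos_sub, mul_add, sum_add_distrib, sum_mul, mul_assoc]
  have hpos : 0 ≤ cos (w / 2) := cos_nonneg_of_mem_Icc ⟨by linarith [pi_pos], by linarith⟩
  have hbound := cos_half_le_sum_mul_cos_sub (by linarith [pi_pos]) ht0 ht1 hθ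
  rw [hexpand] at hbound
  calc (1 + cos w) / 2 = cos (w / 2) ^ 2 := by
        rw [cos_sq, mul_div_cancel₀ _ two_ne_zero]; ring
    _ ≤ _ := pow_le_pow_left₀ hpos hbound 2
    _ ≤ barycentreNormSq t θ := sq_mul_cos_add_mul_sin_le _ _ _

variable [DecidableEq ι]

noncomputable def pairWeights (j₀ k₀ : ι) : ι → ℝ :=
  Pi.single j₀ (1 / 2) + Pi.single k₀ (1 / 2)

theorem sum_pairWeights_mul [Fintype ι] (j₀ k₀ : ι) (f : ι → ℝ) :
    ∑ j, pairWeights j₀ k₀ j * f j = (f j₀ + f k₀) / 2 := by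
  simp only [pairWeights, Pi.add_apply, Pi.single_apply, add_mul, ite_mul, zero_mul,
    sum_add_distrib, sum_ite_eq', mem_univ, ↓reduceIte]
  ring

theorem pairWeights_nonneg (j₀ k₀ j : ι) : 0 ≤ pairWeights j₀ k₀ j := by
  simp only [pairWeights, Pi.add_apply, Pi.single_apply]
  split_ifs <;> norm_num

theorem sum_pairWeights [Fintype ι] (j₀ k₀ : ι) : ∑ j, pairWeights j₀ k₀ j = 1 := by
  simpa using sum_pairWeights_mul j₀ k₀ 1

theorem pairWeights_apply_of_ne {j₀ k₀ j : ι} (h₀ : j ≠ j₀) (h₁ : j ≠ k₀) :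
    pairWeights j₀ k₀ j = 0 := by
  simp [pairWeights, h₀, h₁]

theorem barycentreNormSq_pairWeights [Fintype ι] (θ : ι → ℝ) (j₀ k₀ : ι) :
    barycentreNormSq (pairWeights j₀ k₀) θ = (1 + cos (θ j₀ - θ k₀)) / 2 := by
  rw [barycentreNormSq, sum_pairWeights_mul, sum_pairWeights_mul, cos_sub]
  nlinarith [sin_sq_add_cos_sq (θ j₀), sin_sq_add_cos_sq (θ k₀)]

end

theorem max_pairwise_term_two_point_support_general {d : ℕ} (θs : Fin d → ℝ) (θarc a : ℝ)
    (hθ : θarc ≤ Real.pi)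
    (harc : ∀ j, θs j ∈ Set.Icc a (a + θarc))
    (j₀ k₀ : Fin d)
    (hsep : |θs j₀ - θs k₀| = θarc) :
    ∃ s : Fin d → ℝ, (∀ j, 0 ≤ s j) ∧ (∑ j, s j = 1) ∧
      (∀ j, j ≠ j₀ → j ≠ k₀ → s j = 0) ∧
      ∀ t : Fin d → ℝ, (∀ j, 0 ≤ t j) → (∑ j, t j = 1) →
        (∑ j, ∑ k ∈ Finset.univ.filter (fun k => k ≠ j),
            t j * t k * (1 - Real.cos (θs j - θs k))) ≤
          ∑ j, ∑ k ∈ Finset.univ.filter (fun k => k ≠ j),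
            s j * s k * (1 - Real.cos (θs j - θs k)) := by
  refine ⟨pairWeights j₀ k₀, pairWeights_nonneg j₀ k₀, sum_pairWeights j₀ k₀,
    fun j h₀ h₁ => pairWeights_apply_of_ne h₀ h₁, fun t ht0 ht1 => ?_⟩
  rw [sum_sum_ne_mul_one_sub_cos_eq θs ht1,
    sum_sum_ne_mul_one_sub_cos_eq θs (sum_pairWeights j₀ k₀),
    barycentreNormSq_pairWeights, ← cos_abs, hsep]
  have hθ0 : 0 ≤ θarc := hsep ▸ abs_nonneg _
  linarith [one_add_cos_div_two_le_barycentreNormSq hθ0 hθ ht0 ht1 harc]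

/-- For angles in an arc of width `θarc ≤ π`, the quantity
`Σ_{j≠k} tⱼ t_k (1 − cos(θⱼ − θ_k))` over the probability simplex is maximized by weights
supported only on two indices `j₀, k₀` achieving the maximal separation `|θⱼ₀ − θ_k₀| = θarc`. -/
theorem max_pairwise_term_two_point_support {d : ℕ} (θs : Fin d → ℝ) (θarc a : ℝ)
    (hθ : θarc ≤ Real.pi) (hθ0 : 0 ≤ θarc)
    (harc : ∀ j, θs j ∈ Set.Icc a (a + θarc))
    (j₀ k₀ : Fin d)
    (hsep : |θs j₀ - θs k₀| = θarc)
    (hmax : ∀ j k, |θs j - θs k| ≤ θarc) :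
    ∃ s : Fin d → ℝ, (∀ j, 0 ≤ s j) ∧ (∑ j, s j = 1) ∧
      (∀ j, j ≠ j₀ → j ≠ k₀ → s j = 0) ∧
      ∀ t : Fin d → ℝ, (∀ j, 0 ≤ t j) → (∑ j, t j = 1) →
        (∑ j, ∑ k ∈ Finset.univ.filter (fun k => k ≠ j),
            t j * t k * (1 - Real.cos (θs j - θs k))) ≤
          ∑ j, ∑ k ∈ Finset.univ.filter (fun k => k ≠ j),
            s j * s k * (1 - Real.cos (θs j - θs k)) :=
  max_pairwise_term_two_point_support_general θs θarc a hθ harc j₀ k₀ hsep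
end

section
/- Given two quantum states ρ₁ and ρ₂, each presented with probability 1/2, the optimal probability of correctly identifying which state was given, over all two-outcome POVM measurements, is P = 1/2 + (1/4)‖ρ₁ − ρ₂‖₁ (the Holevo–Helstrom bound). In particular the states are perfectly distinguishable iff ‖ρ₁ − ρ₂‖₁ = 2, and completely indistinguishable iff ρ₁ = ρ₂. -/
open Matrix BigOperators
open scoped ComplexOrder

noncomputable def traceNorm {m : Type*} [Fintype m] [DecidableEq m] (A : Matrix m m ℂ) : ℝ :=
  (((Matrix.posSemidef_conjTranspose_mul_self A).1.eigenvectorUnitary *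
      diagonal (fun i => ((Real.sqrt ((Matrix.posSemidef_conjTranspose_mul_self A).1.eigenvalues i) : ℝ) : ℂ)) *
      (star (Matrix.posSemidef_conjTranspose_mul_self A).1.eigenvectorUnitary : Matrix m m ℂ)).trace).re
/-!
Write `Δ = ρ₁ - ρ₂ = ∑ λᵢ uᵢuᵢ*`. The success probability of `(E, 1 - E)` is `1/2 + (1/2) Re Tr[EΔ]`,
and in the eigenbasis `Tr[EΔ] = ∑ ⟨uᵢ, E uᵢ⟩ λᵢ` with weights `⟨uᵢ, E uᵢ⟩ ∈ [0, 1]`, so it is at most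
`∑ λᵢ⁺`, with equality for the projection onto the positive eigenspace of `Δ`. Since `Tr Δ = 0`, the
positive and negative eigenvalues balance and `∑ λᵢ⁺ = ‖Δ‖₁ / 2`.
-/

open scoped MatrixOrder

lemma mul_le_posPart {R : Type*} [Ring R] [LinearOrder R] [IsStrictOrderedRing R] {t x : R}
    (ht₀ : 0 ≤ t) (ht₁ : t ≤ 1) : t * x ≤ x⁺ := by
  rcases le_total 0 x with hx | hx
  · exact (posPart_eq_self.mpr hx).symm ▸ mul_le_of_le_one_left hx ht₁
  · exact (posPart_eq_zero.mpr hx).symm ▸ mul_nonpos_of_nonneg_of_nonpos ht₀ hx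

lemma Finset.sum_posPart_of_sum_eq_zero {ι R : Type*} [Field R] [LinearOrder R]
    [IsStrictOrderedRing R] (s : Finset ι) (x : ι → R) (h : ∑ i ∈ s, x i = 0) :
    ∑ i ∈ s, (x i)⁺ = (∑ i ∈ s, |x i|) / 2 := by
  have hpos : ∀ a : R, a⁺ = |a| / 2 + a / 2 := fun a => by
    linarith [posPart_add_negPart a, posPart_sub_negPart a]
  simp only [hpos, Finset.sum_add_distrib, ← Finset.sum_div, h, zero_div, add_zero]

namespace Matrix.IsHermitian

variable {n : Type*} [Fintype n] [DecidableEq n] {A : Matrix n n ℂ}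

lemma trace_cfc (hA : A.IsHermitian) (f : ℝ → ℝ) :
    (cfc f A).trace = ∑ i, (f (hA.eigenvalues i) : ℂ) := by
  rw [hA.cfc_eq, IsHermitian.cfc, Unitary.conjStarAlgAut_apply, trace_mul_cycle,
    Unitary.coe_star_mul_self, one_mul, trace_diagonal]
  rfl

lemma traceNorm_eq_sum_abs_eigenvalues (hA : A.IsHermitian) :
    traceNorm A = ∑ i, |hA.eigenvalues i| := by
  have hAA := (posSemidef_conjTranspose_mul_self A).1
  have hsqrt : cfc Real.sqrt (Aᴴ * A) = cfc (fun x : ℝ => |x|) A := by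
    rw [hA.eq, ← cfc_id' ℝ A, ← cfc_mul .., cfc_id' ℝ A, ← cfc_comp' ..]
    exact cfc_congr fun x _ => Real.sqrt_mul_self_eq_abs x
  have hdef : traceNorm A = (cfc Real.sqrt (Aᴴ * A)).trace.re := by
    rw [hAA.cfc_eq]
    rfl
  rw [hdef, hsqrt, hA.trace_cfc, Complex.re_sum]
  simp only [Complex.ofReal_re]

lemma traceNorm_eq_zero_iff (hA : A.IsHermitian) : traceNorm A = 0 ↔ A = 0 := by
  rw [hA.traceNorm_eq_sum_abs_eigenvalues, ← hA.eigenvalues_eq_zero_iff, funext_iff,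
    Finset.sum_eq_zero_iff_of_nonneg fun i _ => abs_nonneg _]
  simp

lemma sum_posPart_eigenvalues_of_trace_eq_zero (hA : A.IsHermitian) (h : A.trace = 0) :
    ∑ i, (hA.eigenvalues i)⁺ = traceNorm A / 2 := by
  have hsum : ∑ i, hA.eigenvalues i = 0 := by
    simpa [h, eq_comm] using congrArg Complex.re hA.trace_eq_sum_eigenvalues
  rw [Finset.sum_posPart_of_sum_eq_zero _ _ hsum, hA.traceNorm_eq_sum_abs_eigenvalues]

lemma trace_mul_eq_sum_eigenvalues (hA : A.IsHermitian) (E : Matrix n n ℂ) :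
    (E * A).trace = ∑ i, (star (hA.eigenvectorUnitary : Matrix n n ℂ) * E *
      (hA.eigenvectorUnitary : Matrix n n ℂ)) i i * hA.eigenvalues i := by
  conv_lhs => rw [hA.spectral_theorem, Unitary.conjStarAlgAut_apply]
  rw [← mul_assoc, ← mul_assoc, trace_mul_cycle, ← mul_assoc]
  simp [trace, mul_diagonal]

lemma re_trace_mul_le_sum_posPart (hA : A.IsHermitian) {E : Matrix n n ℂ} (hE : E.PosSemidef)
    (hE₁ : (1 - E).PosSemidef) : (E * A).trace.re ≤ ∑ i, (hA.eigenvalues i)⁺ := by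
  set U : Matrix n n ℂ := (hA.eigenvectorUnitary : Matrix n n ℂ)
  have hF : (star U * E * U).PosSemidef := hE.conjTranspose_mul_mul_same U
  have hF₁ : (1 - star U * E * U).PosSemidef := by
    have : 1 - star U * E * U = star U * (1 - E) * U := by
      rw [mul_sub, sub_mul, mul_one, Unitary.coe_star_mul_self]
    exact this ▸ hE₁.conjTranspose_mul_mul_same U
  rw [hA.trace_mul_eq_sum_eigenvalues, Complex.re_sum]
  refine Finset.sum_le_sum fun i _ => ?_
  rw [Complex.re_mul_ofReal]
  refine mul_le_posPart (Complex.nonneg_iff.mp hF.diag_nonneg).1 ?_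
  have h₁ := (Complex.nonneg_iff.mp (hF₁.diag_nonneg (i := i))).1
  rwa [sub_apply, one_apply_eq, Complex.sub_re, Complex.one_re, sub_nonneg] at h₁

end Matrix.IsHermitian

namespace Matrix

variable {n : Type*} [Fintype n] [DecidableEq n]

-- `cfc` returns the junk value `0` when `A` is not Hermitian.
noncomputable def positiveSpectralProjection (A : Matrix n n ℂ) : Matrix n n ℂ :=
  cfc (fun x : ℝ => if 0 < x then 1 else 0) A

lemma posSemidef_positiveSpectralProjection (A : Matrix n n ℂ) :
    (positiveSpectralProjection A).PosSemidef :=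
  nonneg_iff_posSemidef.mp <| cfc_nonneg fun x _ => by split_ifs <;> norm_num

lemma posSemidef_one_sub_positiveSpectralProjection (A : Matrix n n ℂ) :
    (1 - positiveSpectralProjection A).PosSemidef :=
  le_iff.mp <| cfc_le_one _ _ fun x _ => by split_ifs <;> norm_num

lemma IsHermitian.re_trace_positiveSpectralProjection_mul {A : Matrix n n ℂ} (hA : A.IsHermitian) :
    (positiveSpectralProjection A * A).trace.re = ∑ i, (hA.eigenvalues i)⁺ := by
  have hcont := fun f : ℝ → ℝ => (spectrum ℝ A).toFinite.continuousOn f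
  nth_rewrite 2 [← cfc_id' ℝ A]
  rw [positiveSpectralProjection, ← cfc_mul _ _ A (hcont _) (hcont _), hA.trace_cfc,
    Complex.re_sum]
  refine Finset.sum_congr rfl fun i _ => ?_
  rw [Complex.ofReal_re, posPart_eq_ite_lt]
  split_ifs <;> simp

end Matrix

/-- Holevo–Helstrom: Given states `ρ₁, ρ₂` each with prior `1/2`, the optimal
success probability over two-outcome POVMs `(E, 1 − E)` is `1/2 + (1/4)‖ρ₁ − ρ₂‖₁`, and the
states are completely indistinguishable (optimal value `1/2`, i.e. `‖ρ₁ − ρ₂‖₁ = 0`) iff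
`ρ₁ = ρ₂`. -/
theorem holevo_helstrom {d : ℕ} (ρ₁ ρ₂ : Matrix (Fin d) (Fin d) ℂ)
    (hρ₁ : ρ₁.PosSemidef) (hρ₂ : ρ₂.PosSemidef)
    (hρ₁tr : ρ₁.trace = 1) (hρ₂tr : ρ₂.trace = 1) :
    IsGreatest
      {P : ℝ | ∃ E : Matrix (Fin d) (Fin d) ℂ, E.PosSemidef ∧ (1 - E).PosSemidef ∧
        P = (1/2) * ((E * ρ₁).trace.re) + (1/2) * (((1 - E) * ρ₂).trace.re)}
      (1/2 + (1/4) * traceNorm (ρ₁ - ρ₂)) ∧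
      ((1/2 + (1/4) * traceNorm (ρ₁ - ρ₂) = 1) ↔ traceNorm (ρ₁ - ρ₂) = 2) ∧
      (traceNorm (ρ₁ - ρ₂) = 0 ↔ ρ₁ = ρ₂) := by
  have hΔ : (ρ₁ - ρ₂).IsHermitian := hρ₁.1.sub hρ₂.1
  have hΔtr : (ρ₁ - ρ₂).trace = 0 := by rw [trace_sub, hρ₁tr, hρ₂tr, sub_self]
  have hsucc : ∀ E : Matrix (Fin d) (Fin d) ℂ,
      (1/2) * (E * ρ₁).trace.re + (1/2) * ((1 - E) * ρ₂).trace.re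
        = 1/2 + (1/2) * (E * (ρ₁ - ρ₂)).trace.re := fun E => by
    simp only [sub_mul, mul_sub, one_mul, trace_sub, hρ₂tr, Complex.sub_re, Complex.one_re]
    ring
  have hpos := hΔ.sum_posPart_eigenvalues_of_trace_eq_zero hΔtr
  refine ⟨⟨⟨positiveSpectralProjection (ρ₁ - ρ₂), posSemidef_positiveSpectralProjection _,
    posSemidef_one_sub_positiveSpectralProjection _, ?_⟩, ?_⟩, ?_, ?_⟩
  · rw [hsucc, hΔ.re_trace_positiveSpectralProjection_mul, hpos]
    ring
  · rintro P ⟨E, hE, hE₁, rfl⟩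
    have hle := hΔ.re_trace_mul_le_sum_posPart hE hE₁
    rw [hsucc]
    linarith
  · constructor <;> intro h <;> linarith
  · exact hΔ.traceNorm_eq_zero_iff.trans sub_eq_zero
end
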